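/- arXiv:2308.07507 — 4 statements merged into one kernel-verified Lean document; each statement's English description precedes it below -/
import Mathlib

section
/- If g(y) is nonnegative and increasing in y, and f(x,y) is nonnegative, submodular in (x,y), and decreasing in x, then the product g(y)·f(x,y) is submodular in (x,y). -/
/-- If `g` is nonnegative and increasing, and `f` is nonnegative, submodular in `(x,y)`,
and decreasing in `x`, then `(x,y) ↦ g y * f x y` is submodular in `(x,y)`. -/
theorem stmt0 (g : ℝ → ℝ) (f : ℝ → ℝ → ℝ)
    (hg_nonneg : ∀ y, 0 ≤ g y) (hg_mono : Monotone g)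
    (hf_nonneg : ∀ x y, 0 ≤ f x y)
    (hf_submod : ∀ xm xp ym yp : ℝ, xm ≤ xp → ym ≤ yp →
      f xp yp - f xm yp ≤ f xp ym - f xm ym)
    (hf_dec : ∀ y, Antitone (fun x => f x y)) :
    ∀ xm xp ym yp : ℝ, xm ≤ xp → ym ≤ yp →
      g yp * f xp yp - g yp * f xm yp ≤ g ym * f xp ym - g ym * f xm ym := by
  intro xm xp ym yp hx hy
  have hA : f xp yp ≤ f xm yp := hf_dec yp hx
  have hAB := hf_submod xm xp ym yp hx hy
  have hg : g ym ≤ g yp := hg_mono hy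
  nlinarith [hg_nonneg ym, hg_nonneg yp, mul_le_mul_of_nonpos_right hg (by linarith : f xp yp - f xm yp ≤ 0), mul_le_mul_of_nonneg_left hAB (hg_nonneg ym)]
end

section
/- If f(x,θ) is submodular in (x,θ) and concave in x, and Z(θ) is a family of nonnegative real-valued random variables that is stochastically increasing in θ (in the usual stochastic order), then the function (x,θ) ↦ E[f(x + Z(θ), θ)] is submodular in (x,θ) and concave in x. -/
open MeasureTheory

lemma conc_diff_antitone {g : ℝ → ℝ} (hg : ConcaveOn ℝ Set.univ g) {x₁ x₂ : ℝ}
    (hx : x₁ ≤ x₂) : Antitone (fun z => g (x₂ + z) - g (x₁ + z)) := by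
  intro z z' hzz
  simp only
  rw [sub_le_sub_iff]
  -- goal: g (x₂ + z') + g (x₁ + z) ≤ g (x₂ + z) + g (x₁ + z')
  set a := x₁ + z
  set b := x₂ + z'
  have hab : a ≤ b := by simp only [a, b]; linarith
  rcases eq_or_lt_of_le hab with h | h
  · have h' : x₁ + z = x₂ + z' := h
    have h1 : x₁ = x₂ := by linarith
    have h2 : z = z' := by linarith
    simp only [a, b, h1, h2]; linarith
  · set t : ℝ := (x₂ + z - a) / (b - a) with ht
    have hba : (0:ℝ) < b - a := by linarith
    have ht0 : 0 ≤ t := by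
      apply div_nonneg _ hba.le
      simp only [a]; linarith
    have ht1 : t ≤ 1 := by
      rw [div_le_one hba]
      simp only [a, b]; linarith
    have htm : t * (b - a) = x₂ + z - a := by rw [ht]; exact div_mul_cancel₀ _ hba.ne'
    have ha' : a = x₁ + z := rfl
    have hb' : b = x₂ + z' := rfl
    have hc : x₂ + z = (1 - t) * a + t * b := by
      linear_combination -htm
    have hd : x₁ + z' = t * a + (1 - t) * b := by
      linear_combination htm - hb' - ha'
    have H1 := hg.2 (Set.mem_univ a) (Set.mem_univ b) (by linarith : (0:ℝ) ≤ 1 - t) ht0 (by ring)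
    have H2 := hg.2 (Set.mem_univ a) (Set.mem_univ b) ht0 (by linarith : (0:ℝ) ≤ 1 - t) (by ring)
    simp only [smul_eq_mul] at H1 H2
    rw [← hc] at H1
    rw [← hd] at H2
    linarith

lemma upward_measure_le {Ω : Type*} [MeasurableSpace Ω] (μ : Measure Ω) [IsProbabilityMeasure μ]
    (Z₁ Z₂ : Ω → ℝ) (h1 : Measurable Z₁) (h2 : Measurable Z₂)
    (hst : ∀ z, μ {ω | z < Z₁ ω} ≤ μ {ω | z < Z₂ ω})
    (S : Set ℝ) (hS : ∀ ⦃y y'⦄, y ∈ S → y ≤ y' → y' ∈ S) :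
    μ (Z₁ ⁻¹' S) ≤ μ (Z₂ ⁻¹' S) := by
  rcases Set.eq_empty_or_nonempty S with rfl | hne
  · simp
  by_cases hbdd : BddBelow S
  · set c := sInf S with hc
    by_cases hcS : c ∈ S
    · -- S = Ici c
      have hSeq : S = Set.Ici c := by
        ext y; constructor
        · intro hy; exact csInf_le hbdd hy
        · intro hy; exact hS hcS hy
      rw [hSeq]
      -- μ {c ≤ Z₁} ≤ μ {c ≤ Z₂} via limits
      have key : ∀ n : ℕ, μ (Z₁ ⁻¹' Set.Ici c) ≤ μ {ω | c - 1/(n+1) < Z₂ ω} := by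
        intro n
        refine le_trans (measure_mono ?_) (hst (c - 1/(n+1)))
        intro ω hω
        have : (0:ℝ) < 1/(n+1) := by positivity
        simp only [Set.mem_preimage, Set.mem_Ici] at hω
        simp only [Set.mem_setOf_eq]; linarith
      have hiInter : (⋂ n : ℕ, {ω | c - 1/(n+1) < Z₂ ω}) = Z₂ ⁻¹' Set.Ici c := by
        ext ω
        simp only [Set.mem_iInter, Set.mem_setOf_eq, Set.mem_preimage, Set.mem_Ici]
        constructor
        · intro h
          by_contra hlt
          push_neg at hlt
          obtain ⟨n, hn⟩ := exists_nat_one_div_lt (by linarith : (0:ℝ) < c - Z₂ ω)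
          have := h n
          linarith
        · intro h n
          have : (0:ℝ) < 1/(n+1) := by positivity
          linarith
      have hanti : Antitone (fun n : ℕ => {ω | c - 1/(n+1) < Z₂ ω}) := by
        intro n m hnm ω hω
        simp only [Set.mem_setOf_eq] at hω ⊢
        have hmono : (1:ℝ)/(m+1) ≤ 1/(n+1) := by
          apply one_div_le_one_div_of_le (by positivity)
          have : (n:ℝ) ≤ m := Nat.cast_le.mpr hnm
          linarith
        linarith
      have := hanti.measure_iInter (μ := μ)
        (fun n => (measurableSet_lt measurable_const h2).nullMeasurableSet)
        ⟨0, measure_ne_top μ _⟩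
      rw [hiInter] at this
      rw [this]
      exact le_iInf key
    · -- S = Ioi c
      have hSeq : S = Set.Ioi c := by
        ext y; constructor
        · intro hy
          rcases lt_or_eq_of_le (csInf_le hbdd hy) with h | h
          · exact h
          · exact absurd (by simp only [hc]; rw [h]; exact hy) hcS
        · intro hy
          obtain ⟨s, hsS, hsy⟩ := csInf_lt_iff hbdd hne |>.mp hy
          exact hS hsS hsy.le
      rw [hSeq]
      exact hst c
  · -- S = univ
    have hSeq : S = Set.univ := by
      ext y
      simp only [Set.mem_univ, iff_true]
      obtain ⟨s, hsS, hsy⟩ := not_bddBelow_iff.mp hbdd y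
      exact hS hsS hsy.le
    rw [hSeq]
    simp

lemma antitone_integral_le {Ω : Type*} [MeasurableSpace Ω] (μ : Measure Ω)
    [IsProbabilityMeasure μ]
    {φ : ℝ → ℝ} (hφ : Antitone φ) (Z₁ Z₂ : Ω → ℝ) (h1 : Measurable Z₁) (h2 : Measurable Z₂)
    (hn1 : ∀ ω, 0 ≤ Z₁ ω) (hn2 : ∀ ω, 0 ≤ Z₂ ω)
    (hst : ∀ z, μ {ω | z < Z₁ ω} ≤ μ {ω | z < Z₂ ω})
    (hi1 : Integrable (fun ω => φ (Z₁ ω)) μ) (hi2 : Integrable (fun ω => φ (Z₂ ω)) μ) :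
    ∫ ω, φ (Z₂ ω) ∂μ ≤ ∫ ω, φ (Z₁ ω) ∂μ := by
  set ψ : ℝ → ℝ := fun y => φ 0 - φ y with hψ
  have hψmono : Monotone ψ := fun y y' h => by
    simp only [ψ]; have := hφ h; linarith
  have hψnn : ∀ (W : Ω → ℝ), (∀ ω, 0 ≤ W ω) → ∀ ω, 0 ≤ ψ (W ω) := by
    intro W hW ω
    simp only [ψ]
    have := hφ (hW ω)
    linarith
  have hiψ1 : Integrable (fun ω => ψ (Z₁ ω)) μ := (integrable_const (φ 0)).sub hi1
  have hiψ2 : Integrable (fun ω => ψ (Z₂ ω)) μ := (integrable_const (φ 0)).sub hi2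
  have key : ∫ ω, ψ (Z₁ ω) ∂μ ≤ ∫ ω, ψ (Z₂ ω) ∂μ := by
    rw [integral_eq_lintegral_of_nonneg_ae (Filter.Eventually.of_forall (hψnn Z₁ hn1))
      hiψ1.aestronglyMeasurable,
      integral_eq_lintegral_of_nonneg_ae (Filter.Eventually.of_forall (hψnn Z₂ hn2))
      hiψ2.aestronglyMeasurable]
    apply ENNReal.toReal_mono hiψ2.lintegral_lt_top.ne
    rw [lintegral_eq_lintegral_meas_lt μ (Filter.Eventually.of_forall (hψnn Z₁ hn1))
      hiψ1.aemeasurable,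
      lintegral_eq_lintegral_meas_lt μ (Filter.Eventually.of_forall (hψnn Z₂ hn2))
      hiψ2.aemeasurable]
    apply lintegral_mono
    intro t
    show μ (Z₁ ⁻¹' {y | t < ψ y}) ≤ μ (Z₂ ⁻¹' {y | t < ψ y})
    exact upward_measure_le μ Z₁ Z₂ h1 h2 hst _ (fun y y' hy hyy => lt_of_lt_of_le hy (hψmono hyy))
  have e1 : ∫ ω, ψ (Z₁ ω) ∂μ = φ 0 - ∫ ω, φ (Z₁ ω) ∂μ := by
    simp only [ψ]
    rw [integral_sub (integrable_const _) hi1, integral_const]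
    simp
  have e2 : ∫ ω, ψ (Z₂ ω) ∂μ = φ 0 - ∫ ω, φ (Z₂ ω) ∂μ := by
    simp only [ψ]
    rw [integral_sub (integrable_const _) hi2, integral_const]
    simp
  rw [e1, e2] at key
  linarith

/-- If `f(x,θ)` is submodular in `(x,θ)` and concave in `x`, and `Z(θ)` is a family of
nonnegative real random variables stochastically increasing in `θ`, then
`(x,θ) ↦ E[f(x + Z(θ), θ)]` is submodular in `(x,θ)` and concave in `x`. -/
theorem stmt1 {Θ : Type*} [LinearOrder Θ]
    {Ω : Type*} [MeasurableSpace Ω] (μ : Measure Ω) [IsProbabilityMeasure μ]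
    (f : ℝ → Θ → ℝ) (Z : Θ → Ω → ℝ)
    (hsub : ∀ x₁ x₂ : ℝ, ∀ θ₁ θ₂ : Θ, x₁ ≤ x₂ → θ₁ ≤ θ₂ →
      f x₂ θ₂ - f x₁ θ₂ ≤ f x₂ θ₁ - f x₁ θ₁)
    (hconc : ∀ θ, ConcaveOn ℝ Set.univ (fun x => f x θ))
    (hZmeas : ∀ θ, Measurable (Z θ))
    (hZnonneg : ∀ θ ω, 0 ≤ Z θ ω)
    (hZst : ∀ θ₁ θ₂ : Θ, θ₁ ≤ θ₂ → ∀ z : ℝ,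
      μ {ω | z < Z θ₁ ω} ≤ μ {ω | z < Z θ₂ ω})
    (hint : ∀ x θ, Integrable (fun ω => f (x + Z θ ω) θ) μ) :
    (∀ x₁ x₂ : ℝ, ∀ θ₁ θ₂ : Θ, x₁ ≤ x₂ → θ₁ ≤ θ₂ →
      (∫ ω, f (x₂ + Z θ₂ ω) θ₂ ∂μ) - (∫ ω, f (x₁ + Z θ₂ ω) θ₂ ∂μ)
        ≤ (∫ ω, f (x₂ + Z θ₁ ω) θ₁ ∂μ) - (∫ ω, f (x₁ + Z θ₁ ω) θ₁ ∂μ)) ∧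
    (∀ θ, ConcaveOn ℝ Set.univ (fun x => ∫ ω, f (x + Z θ ω) θ ∂μ)) := by
  constructor
  · intro x₁ x₂ θ₁ θ₂ hx hθ
    set g₁ : ℝ → ℝ := fun z => f (x₂ + z) θ₁ - f (x₁ + z) θ₁ with hg₁
    set g₂ : ℝ → ℝ := fun z => f (x₂ + z) θ₂ - f (x₁ + z) θ₂ with hg₂
    have hg1anti : Antitone g₁ := conc_diff_antitone (hconc θ₁) hx
    have hg21 : ∀ z, g₂ z ≤ g₁ z := fun z =>
      hsub (x₁ + z) (x₂ + z) θ₁ θ₂ (by linarith) hθ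
    have hintg2 : Integrable (fun ω => g₂ (Z θ₂ ω)) μ := (hint x₂ θ₂).sub (hint x₁ θ₂)
    have hintg1_1 : Integrable (fun ω => g₁ (Z θ₁ ω)) μ := (hint x₂ θ₁).sub (hint x₁ θ₁)
    have hintg1_2 : Integrable (fun ω => g₁ (Z θ₂ ω)) μ := by
      have hb : Integrable (fun ω => |g₂ (Z θ₂ ω)| + |g₁ 0|) μ :=
        hintg2.abs.add (integrable_const _)
      refine Integrable.mono hb
        ((hg1anti.measurable.comp (hZmeas θ₂)).aestronglyMeasurable) ?_
      filter_upwards with ω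
      have h1 : g₁ (Z θ₂ ω) ≤ g₁ 0 := hg1anti (hZnonneg θ₂ ω)
      have h2 : g₂ (Z θ₂ ω) ≤ g₁ (Z θ₂ ω) := hg21 _
      simp only [Real.norm_eq_abs]
      rw [abs_of_nonneg (by positivity : (0:ℝ) ≤ |g₂ (Z θ₂ ω)| + |g₁ 0|)]
      rw [abs_le]
      constructor
      · have := neg_abs_le (g₂ (Z θ₂ ω)); have := abs_nonneg (g₁ 0); linarith
      · have := le_abs_self (g₁ 0); have := abs_nonneg (g₂ (Z θ₂ ω)); linarith
    have eL : (∫ ω, f (x₂ + Z θ₂ ω) θ₂ ∂μ) - (∫ ω, f (x₁ + Z θ₂ ω) θ₂ ∂μ)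
        = ∫ ω, g₂ (Z θ₂ ω) ∂μ := (integral_sub (hint x₂ θ₂) (hint x₁ θ₂)).symm
    have eR : (∫ ω, f (x₂ + Z θ₁ ω) θ₁ ∂μ) - (∫ ω, f (x₁ + Z θ₁ ω) θ₁ ∂μ)
        = ∫ ω, g₁ (Z θ₁ ω) ∂μ := (integral_sub (hint x₂ θ₁) (hint x₁ θ₁)).symm
    rw [eL, eR]
    calc ∫ ω, g₂ (Z θ₂ ω) ∂μ ≤ ∫ ω, g₁ (Z θ₂ ω) ∂μ :=
          integral_mono hintg2 hintg1_2 (fun ω => hg21 _)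
      _ ≤ ∫ ω, g₁ (Z θ₁ ω) ∂μ :=
          antitone_integral_le μ hg1anti (Z θ₁) (Z θ₂) (hZmeas θ₁) (hZmeas θ₂)
            (hZnonneg θ₁) (hZnonneg θ₂) (hZst θ₁ θ₂ hθ) hintg1_1 hintg1_2
  · intro θ
    refine ⟨convex_univ, fun x _ y _ a b ha hb hab => ?_⟩
    simp only [smul_eq_mul]
    have e1 : a * (∫ ω, f (x + Z θ ω) θ ∂μ) + b * (∫ ω, f (y + Z θ ω) θ ∂μ)
        = ∫ ω, (a * f (x + Z θ ω) θ + b * f (y + Z θ ω) θ) ∂μ := by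
      rw [integral_add ((hint x θ).const_mul a) ((hint y θ).const_mul b),
        integral_const_mul, integral_const_mul]
    rw [e1]
    refine integral_mono (((hint x θ).const_mul a).add ((hint y θ).const_mul b))
      (hint (a * x + b * y) θ) (fun ω => ?_)
    have key := (hconc θ).2 (Set.mem_univ (x + Z θ ω)) (Set.mem_univ (y + Z θ ω)) ha hb hab
    simp only [smul_eq_mul] at key
    have : a * (x + Z θ ω) + b * (y + Z θ ω) = a * x + b * y + Z θ ω := by
      have h : a + b = 1 := hab
      linear_combination Z θ ω * h
    rw [this] at key
    exact key
end

section
/- Let J : (0,∞) → ℝ be twice continuously differentiable and concave, and let g(T) = J(T)/T. If T' is a strict local maximizer of g on (0,∞), then T' is the unique (strict) global maximizer of g on (0,∞). -/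
/-- For `J` twice continuously differentiable and concave on `(0,∞)` and `g T = J T / T`,
any strict local maximizer of `g` on `(0,∞)` is its unique strict global maximizer. -/
theorem stmt8 (J : ℝ → ℝ)
    (hJ : ContDiffOn ℝ 2 J (Set.Ioi 0))
    (hconc : ConcaveOn ℝ (Set.Ioi 0) J)
    (g : ℝ → ℝ) (hg : ∀ T, g T = J T / T)
    (T' : ℝ) (hT' : 0 < T')
    (hloc : ∃ ε > 0, ∀ T : ℝ, 0 < T → T ≠ T' → |T - T'| < ε → g T < g T') :
    ∀ T : ℝ, 0 < T → T ≠ T' → g T < g T' := by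
  obtain ⟨ε, hε, hlocal⟩ := hloc
  intro T hT hne
  by_contra hcon
  push_neg at hcon
  have hd : 0 < |T - T'| := abs_pos.mpr (sub_ne_zero.mpr hne)
  set m : ℝ := min (ε / 2) (|T - T'| / 2) with hm_def
  have hm0 : 0 < m := lt_min (by linarith) (by linarith)
  set a : ℝ := m / |T - T'| with ha_def
  have ha0 : 0 < a := div_pos hm0 hd
  have ha1 : a < 1 := by
    rw [ha_def, div_lt_one hd]
    exact lt_of_le_of_lt (min_le_right _ _) (by linarith)
  set S : ℝ := a * T + (1 - a) * T' with hS_def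
  have hS0 : 0 < S := by
    have h1 : 0 < a * T := mul_pos ha0 hT
    have h2 : 0 < (1 - a) * T' := mul_pos (by linarith) hT'
    linarith
  have hSsub : S - T' = a * (T - T') := by rw [hS_def]; ring
  have hSne : S ≠ T' := by
    intro h
    have : a * (T - T') = 0 := by rw [← hSsub, h, sub_self]
    rcases mul_eq_zero.mp this with h' | h'
    · exact absurd h' (ne_of_gt ha0)
    · exact hne (sub_eq_zero.mp h')
  have hSclose : |S - T'| < ε := by
    rw [hSsub, abs_mul, abs_of_pos ha0, ha_def, div_mul_cancel₀ _ (ne_of_gt hd)]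
    exact lt_of_le_of_lt (min_le_left _ _) (by linarith)
  have h1 : g S < g T' := hlocal S hS0 hSne hSclose
  have hcc := hconc.2 (Set.mem_Ioi.mpr hT) (Set.mem_Ioi.mpr hT')
    (le_of_lt ha0) (by linarith : (0:ℝ) ≤ 1 - a) (by ring)
  simp only [smul_eq_mul] at hcc
  rw [hg, hg] at h1
  rw [hg, hg] at hcon
  -- set c := J T' / T'
  have hJT : J T' / T' * T ≤ J T := (le_div_iff₀ hT).mp hcon
  have hJT' : J T' / T' * T' = J T' := div_mul_cancel₀ _ (ne_of_gt hT')
  have hcS : J T' / T' * S ≤ J S := by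
    calc J T' / T' * S = a * (J T' / T' * T) + (1 - a) * (J T' / T' * T') := by
          rw [hS_def]; ring
      _ ≤ a * J T + (1 - a) * J T' := by
          rw [hJT']
          have := mul_le_mul_of_nonneg_left hJT (le_of_lt ha0)
          linarith
      _ ≤ J S := hcc
  have : J T' / T' ≤ J S / S := (le_div_iff₀ hS0).mpr hcS
  linarith
end

section
/- If V_λ(x) is submodular in (x,λ) (on ℤ × [0,∞)) and decreasing in x for each λ ≥ 0, then the function (x,λ) ↦ λ·V_λ(x) is submodular in (x,λ). -/
/-- If `V λ x` is submodular in `(x,λ)` on `ℤ × [0,∞)` and decreasing in `x` for each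
`λ ≥ 0`, then `(x,λ) ↦ λ · V λ x` is submodular in `(x,λ)`. -/
theorem stmt11 (V : ℝ → ℤ → ℝ)
    (hsub : ∀ l₁ l₂ : ℝ, 0 ≤ l₁ → l₁ ≤ l₂ → ∀ x₁ x₂ : ℤ, x₁ ≤ x₂ →
      V l₂ x₂ - V l₂ x₁ ≤ V l₁ x₂ - V l₁ x₁)
    (hdec : ∀ l : ℝ, 0 ≤ l → Antitone (V l)) :
    ∀ l₁ l₂ : ℝ, 0 ≤ l₁ → l₁ ≤ l₂ → ∀ x₁ x₂ : ℤ, x₁ ≤ x₂ →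
      l₂ * V l₂ x₂ - l₂ * V l₂ x₁ ≤ l₁ * V l₁ x₂ - l₁ * V l₁ x₁ := by
  intro l₁ l₂ h1 h12 x₁ x₂ hx
  have hs := hsub l₁ l₂ h1 h12 x₁ x₂ hx
  have hd : V l₂ x₂ ≤ V l₂ x₁ := hdec l₂ (h1.trans h12) hx
  nlinarith [mul_le_mul_of_nonpos_right h12 (sub_nonpos.mpr hd),
    mul_le_mul_of_nonneg_left hs h1]
end
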